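/- arXiv:2006.16619 — 3 statements merged into one kernel-verified Lean document; each statement's English description precedes it below -/
import Mathlib

section
/- Let G = (V,E) be a finite connected simple graph with at least two vertices, with diameter δ(G) and volume V(G) = Σ_{v ∈ V} d(v). Then the smallest nonzero eigenvalue λ₁ (the spectral gap) of the random-walk normalized Laplacian Δ = I − D⁻¹A satisfies λ₁ ≥ 1/(δ(G)·V(G)). -/
/-!
Write the eigenvalue equation as `L f = μ D f` with `L = D - A`. Pairing it with the constants
gives `∑ d(v) f(v) = 0`, and pairing it with `f` gives `∑_{a ∼ b} (f a - f b)² = 2μ ∑ d(v) f(v)²`.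
Let `u` maximise `|f|`; as `∑ d f = 0`, some `w` has `f w` of the opposite sign, so
`f(u)² ≤ (f u - f w)²`. Telescoping along a shortest path from `u` to `w` and Cauchy–Schwarz bound
this by `δ(G) · ∑_{a ∼ b} (f a - f b)² / 2 = δ(G) μ ∑ d(v) f(v)² ≤ δ(G) V(G) μ f(u)²`.
-/

open Matrix

/-- The random-walk normalized Laplacian `Δ = I - D⁻¹ A` of a finite simple graph `G`
(over a field `R`), defined whenever every vertex has positive degree. -/
def SimpleGraph.normLapMatrix {V : Type*} [Fintype V] [DecidableEq V]
    (G : SimpleGraph V) [DecidableRel G.Adj] (R : Type*) [Field R] : Matrix V V R :=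
  1 - Matrix.diagonal (fun v => ((G.degree v : R))⁻¹) * G.adjMatrix R

open Finset

lemma exists_mul_nonpos_of_sum_mul_eq_zero {ι : Type*} [Fintype ι] [Nonempty ι] {w f : ι → ℝ}
    (hw : ∀ i, 0 < w i) (h : ∑ i, w i * f i = 0) (c : ℝ) : ∃ i, c * f i ≤ 0 := by
  by_contra! hpos
  have : 0 < ∑ i, w i * (c * f i) := sum_pos (fun i _ => mul_pos (hw i) (hpos i)) univ_nonempty
  simp only [mul_left_comm (w _) c, ← mul_sum, h, mul_zero, lt_irrefl] at this

namespace SimpleGraph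

lemma Walk.sq_sub_le_length_mul_sum_sq {V : Type*} {G : SimpleGraph V} {u v : V}
    (p : G.Walk u v) (f : V → ℝ) :
    (f u - f v) ^ 2 ≤
      p.length * ∑ i ∈ range p.length, (f (p.getVert i) - f (p.getVert (i + 1))) ^ 2 := by
  have htelescope :
      f u - f v = ∑ i ∈ range p.length, (f (p.getVert i) - f (p.getVert (i + 1))) := by
    rw [sum_range_sub' (fun i => f (p.getVert i)), getVert_zero, getVert_length]
  have hcs := sq_sum_le_card_mul_sum_sq (s := range p.length)
    (f := fun i => f (p.getVert i) - f (p.getVert (i + 1)))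
  rwa [card_range, ← htelescope] at hcs

variable {V : Type*} [Fintype V] {G : SimpleGraph V} [DecidableRel G.Adj]

/-- A path traverses each edge once, so its steps and their reversals are distinct adjacent
pairs. -/
lemma Walk.IsPath.two_mul_sum_sq_le {u v : V} {p : G.Walk u v} (hp : p.IsPath)
    (f : V → ℝ) :
    2 * ∑ i ∈ range p.length, (f (p.getVert i) - f (p.getVert (i + 1))) ^ 2 ≤
      ∑ a, ∑ b, if G.Adj a b then (f a - f b) ^ 2 else 0 := by
  classical
  set n := p.length
  have hinj {i j : ℕ} (hi : i ≤ n) (hj : j ≤ n) (h : p.getVert i = p.getVert j) : i = j :=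
    hp.getVert_injOn hi hj h
  have hinj_range {i j : ℕ} (hi : i ∈ range n) (hj : j ∈ range n)
      (h : p.getVert i = p.getVert j) : i = j :=
    hinj (mem_range.mp hi).le (mem_range.mp hj).le h
  set forward := (range n).image fun i => (p.getVert i, p.getVert (i + 1))
  set backward := (range n).image fun i => (p.getVert (i + 1), p.getVert i)
  have hsum_forward : ∑ x ∈ forward, (f x.1 - f x.2) ^ 2 =
      ∑ i ∈ range n, (f (p.getVert i) - f (p.getVert (i + 1))) ^ 2 :=
    sum_image fun i hi j hj h => hinj_range hi hj (Prod.ext_iff.mp h).1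
  have hsum_backward : ∑ x ∈ backward, (f x.1 - f x.2) ^ 2 =
      ∑ i ∈ range n, (f (p.getVert i) - f (p.getVert (i + 1))) ^ 2 := by
    rw [sum_image fun i hi j hj h => hinj_range hi hj (Prod.ext_iff.mp h).2]
    exact sum_congr rfl fun i _ => by ring
  have hdisj : Disjoint forward backward := by
    rw [Finset.disjoint_left]
    rintro _ hforward hbackward
    obtain ⟨i, hi, rfl⟩ := mem_image.mp hforward
    obtain ⟨j, hj, h⟩ := mem_image.mp hbackward
    obtain ⟨h₁, h₂⟩ := Prod.ext_iff.mp h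
    simp only [mem_range] at hi hj
    have := hinj (by omega) (by omega) h₁
    have := hinj (by omega) (by omega) h₂
    omega
  have hsubset : forward ∪ backward ⊆ univ.filter fun x : V × V => G.Adj x.1 x.2 := by
    simp only [forward, backward, subset_iff, mem_union, mem_image, mem_filter, mem_univ,
      true_and]
    rintro _ (⟨i, hi, rfl⟩ | ⟨i, hi, rfl⟩)
    · exact p.adj_getVert_succ (mem_range.mp hi)
    · exact (p.adj_getVert_succ (mem_range.mp hi)).symm
  calc 2 * ∑ i ∈ range n, (f (p.getVert i) - f (p.getVert (i + 1))) ^ 2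
      = ∑ x ∈ forward ∪ backward, (f x.1 - f x.2) ^ 2 := by
        rw [sum_union hdisj, hsum_forward, hsum_backward, two_mul]
    _ ≤ ∑ x ∈ univ.filter fun x : V × V => G.Adj x.1 x.2, (f x.1 - f x.2) ^ 2 :=
        sum_le_sum_of_subset_of_nonneg hsubset fun _ _ _ => sq_nonneg _
    _ = ∑ a, ∑ b, if G.Adj a b then (f a - f b) ^ 2 else 0 := by
        rw [sum_filter, ← Fintype.sum_prod_type']

variable [DecidableEq V]

lemma Walk.IsPath.sq_sub_le_length_mul_lapMatrix {u v : V} {p : G.Walk u v} (hp : p.IsPath)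
    (f : V → ℝ) : (f u - f v) ^ 2 ≤ p.length * (f ⬝ᵥ G.lapMatrix ℝ *ᵥ f) := by
  rw [← toLinearMap₂'_apply', lapMatrix_toLinearMap₂']
  calc (f u - f v) ^ 2
      ≤ p.length * ∑ i ∈ range p.length, (f (p.getVert i) - f (p.getVert (i + 1))) ^ 2 :=
        p.sq_sub_le_length_mul_sum_sq f
    _ ≤ p.length * ((∑ a, ∑ b, if G.Adj a b then (f a - f b) ^ 2 else 0) / 2) := by
        gcongr
        linarith [hp.two_mul_sum_sq_le f]

lemma dotProduct_lapMatrix_mulVec_nonneg (f : V → ℝ) : 0 ≤ f ⬝ᵥ G.lapMatrix ℝ *ᵥ f :=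
  (posSemidef_lapMatrix ℝ G).dotProduct_mulVec_nonneg f

lemma Connected.sq_sub_le_diam_mul_lapMatrix (hconn : G.Connected) (f : V → ℝ) (u v : V) :
    (f u - f v) ^ 2 ≤ G.diam * (f ⬝ᵥ G.lapMatrix ℝ *ᵥ f) := by
  have := hconn.nonempty
  obtain ⟨p, hp, hlength⟩ := hconn.exists_path_of_dist u v
  have hdiam : (p.length : ℝ) ≤ G.diam := by
    rw [hlength]
    exact_mod_cast dist_le_diam (G.connected_iff_ediam_ne_top.mp hconn)
  calc (f u - f v) ^ 2 ≤ p.length * (f ⬝ᵥ G.lapMatrix ℝ *ᵥ f) :=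
        hp.sq_sub_le_length_mul_lapMatrix f
    _ ≤ G.diam * (f ⬝ᵥ G.lapMatrix ℝ *ᵥ f) := by
        gcongr
        exact dotProduct_lapMatrix_mulVec_nonneg f

section Eigenvector

variable {R : Type*} [Field R]

lemma degMatrix_mul_normLapMatrix (hdeg : ∀ v, (G.degree v : R) ≠ 0) :
    G.degMatrix R * G.normLapMatrix R = G.lapMatrix R := by
  rw [normLapMatrix, lapMatrix, degMatrix, mul_sub, mul_one, ← mul_assoc, diagonal_mul_diagonal]
  simp [hdeg]

lemma lapMatrix_mulVec_eq_smul_degMatrix_mulVec (hdeg : ∀ v, (G.degree v : R) ≠ 0)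
    {μ : R} {f : V → R} (hf : G.normLapMatrix R *ᵥ f = μ • f) :
    G.lapMatrix R *ᵥ f = μ • (G.degMatrix R *ᵥ f) := by
  rw [← degMatrix_mul_normLapMatrix hdeg, ← mulVec_mulVec, hf, mulVec_smul]

/-- `L` is symmetric and kills the constants, so `1 ⬝ᵥ L f = 0`. -/
lemma sum_degree_mul_eq_zero {μ : R} {f : V → R}
    (hf : G.lapMatrix R *ᵥ f = μ • (G.degMatrix R *ᵥ f)) (hμ : μ ≠ 0) :
    ∑ v, (G.degree v : R) * f v = 0 := by
  have hker : (fun _ => 1) ⬝ᵥ G.lapMatrix R *ᵥ f = 0 := by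
    rw [dotProduct_mulVec, ← (isSymm_lapMatrix R G).eq, vecMul_transpose,
      lapMatrix_mulVec_const_eq_zero, zero_dotProduct]
  rw [hf, dotProduct_smul, smul_eq_mul, mul_eq_zero] at hker
  simpa [dotProduct, degMatrix_mulVec_apply, hμ] using hker

lemma dotProduct_lapMatrix_mulVec_eq {μ : R} {f : V → R}
    (hf : G.lapMatrix R *ᵥ f = μ • (G.degMatrix R *ᵥ f)) :
    f ⬝ᵥ G.lapMatrix R *ᵥ f = μ * ∑ v, (G.degree v : R) * f v ^ 2 := by
  rw [hf, dotProduct_smul, dotProduct_mulVec_degMatrix, smul_eq_mul]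
  simp only [sq, mul_assoc]

end Eigenvector

lemma Connected.one_le_diam_mul_volume_mul (hconn : G.Connected)
    (hdeg : ∀ v, (0 : ℝ) < G.degree v) {μ : ℝ} {f : V → ℝ} (hf0 : f ≠ 0)
    (hf : G.lapMatrix ℝ *ᵥ f = μ • (G.degMatrix ℝ *ᵥ f)) (hμ : μ ≠ 0) :
    1 ≤ ((G.diam : ℝ) * ∑ v, (G.degree v : ℝ)) * μ := by
  have := hconn.nonempty
  obtain ⟨u, -, hu⟩ := exists_max_image univ (fun v => f v ^ 2) univ_nonempty
  obtain ⟨w, hw⟩ := exists_mul_nonpos_of_sum_mul_eq_zero hdeg (sum_degree_mul_eq_zero hf hμ) (f u)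
  have hfu : 0 < f u ^ 2 := by
    obtain ⟨v, hv⟩ := Function.ne_iff.mp hf0
    exact (sq_pos_of_ne_zero hv).trans_le (hu v (mem_univ v))
  have hμ_nonneg : 0 ≤ μ := by
    have := dotProduct_lapMatrix_mulVec_nonneg (G := G) f
    rw [dotProduct_lapMatrix_mulVec_eq hf] at this
    exact nonneg_of_mul_nonneg_left this
      (sum_pos' (fun v _ => by positivity) ⟨u, mem_univ u, mul_pos (hdeg u) hfu⟩)
  have hkey : 1 * f u ^ 2 ≤ ((G.diam : ℝ) * ∑ v, (G.degree v : ℝ)) * μ * f u ^ 2 :=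
    calc 1 * f u ^ 2 ≤ (f u - f w) ^ 2 := by nlinarith
      _ ≤ G.diam * (f ⬝ᵥ G.lapMatrix ℝ *ᵥ f) := hconn.sq_sub_le_diam_mul_lapMatrix f u w
      _ = G.diam * (μ * ∑ v, (G.degree v : ℝ) * f v ^ 2) := by
          rw [dotProduct_lapMatrix_mulVec_eq hf]
      _ ≤ G.diam * (μ * ∑ v, (G.degree v : ℝ) * f u ^ 2) := by
          gcongr G.diam * (μ * ∑ v, _ * ?_) with v
          exact hu v (mem_univ v)
      _ = ((G.diam : ℝ) * ∑ v, (G.degree v : ℝ)) * μ * f u ^ 2 := by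
          rw [← sum_mul]; ring
  exact le_of_mul_le_mul_right hkey hfu

end SimpleGraph

/-- For a finite connected simple graph `G` with at least two vertices, with diameter
`δ(G)` and volume `V(G) = ∑_v d(v)`, every nonzero eigenvalue of the random-walk
normalized Laplacian `Δ = I - D⁻¹A` — in particular the spectral gap `λ₁`, the smallest
such — satisfies `λ ≥ 1/(δ(G)·V(G))`. -/
theorem spectral_gap_ge_inv_diam_mul_volume
    {V : Type*} [Fintype V] [DecidableEq V] (G : SimpleGraph V) [DecidableRel G.Adj]
    (hconn : G.Connected) (hcard : 2 ≤ Fintype.card V)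
    (μ : ℝ) (hμ : Module.End.HasEigenvalue (Matrix.toLin' (G.normLapMatrix ℝ)) μ)
    (hμ0 : μ ≠ 0) :
    1 / ((G.diam : ℝ) * (∑ v, (G.degree v : ℝ))) ≤ μ := by
  have : Nontrivial V := Fintype.one_lt_card_iff_nontrivial.mp hcard
  have hdeg (v : V) : (0 : ℝ) < G.degree v :=
    mod_cast hconn.preconnected.degree_pos_of_nontrivial v
  obtain ⟨f, hf⟩ := hμ.exists_hasEigenvector
  have hLf := G.lapMatrix_mulVec_eq_smul_degMatrix_mulVec (fun v => (hdeg v).ne')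
    (by simpa using hf.apply_eq_smul)
  have hprod := hconn.one_le_diam_mul_volume_mul hdeg hf.2 hLf hμ0
  have hμ_pos := pos_of_mul_pos_right (one_pos.trans_le hprod) (by positivity)
  rw [div_le_iff₀ (pos_of_mul_pos_left (one_pos.trans_le hprod) hμ_pos.le)]
  linarith
end

section
/- Let G = (V,E) be a finite connected simple graph with at least two vertices, with diameter δ(G) and maximum vertex degree d(G) = max_{v ∈ V} d(v). Then the smallest nonzero eigenvalue λ₁ of the random-walk normalized Laplacian Δ = I − D⁻¹A satisfies the Lin–Yau bound λ₁ ≥ 1/( d(G)·δ(G)·( exp(d(G)·δ(G) + 1) − 1 ) ). -/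
open Matrix

set_option linter.unusedSectionVars false
open Finset

section LinYauAux

variable {V : Type*} [Fintype V] [DecidableEq V]

variable {V : Type*} [Fintype V] [DecidableEq V]

lemma ediam_ne_top_aux (G : SimpleGraph V) (hconn : G.Connected) : G.ediam ≠ ⊤ := by
  have h1 : G.ediam ≤ univ.sup (fun p : V × V => G.edist p.1 p.2) :=
    SimpleGraph.ediam_le_of_edist_le fun u v =>
      Finset.le_sup (f := fun p : V × V => G.edist p.1 p.2) (mem_univ (u, v))
  have h2 : univ.sup (fun p : V × V => G.edist p.1 p.2) < ⊤ := by
    rw [Finset.sup_lt_iff (by simp : (⊥ : ℕ∞) < ⊤)]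
    intro p _
    exact lt_top_iff_ne_top.mpr (SimpleGraph.edist_ne_top_iff_reachable.mpr (hconn _ _))
  exact ne_top_of_le_ne_top h2.ne h1

lemma list_sum_sq_le (l : List ℝ) :
    l.sum ^ 2 ≤ l.length * (l.map (· ^ 2)).sum := by
  induction l with
  | nil => simp
  | cons a l ih =>
    have hq : 0 ≤ (l.map (· ^ 2)).sum :=
      List.sum_nonneg (by simp; intro x _; positivity)
    rcases List.eq_nil_or_concat l with rfl | hne
    · simp
    have hk1 : (1:ℝ) ≤ l.length := by
      obtain ⟨L, b, rfl⟩ := hne; simp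
    simp only [List.sum_cons, List.length_cons, List.map_cons]
    push_cast
    nlinarith [sq_nonneg ((l.length : ℝ) * a - l.sum), ih, hq, hk1,
      mul_nonneg (le_trans zero_le_one hk1) hq]

lemma walk_darts_telescope {G : SimpleGraph V} (f : V → ℝ) :
    ∀ {a b : V} (p : G.Walk a b),
      (p.darts.map (fun d => f d.snd - f d.fst)).sum = f b - f a := by
  intro a b p
  induction p with
  | nil => simp
  | cons h p ih =>
    rw [SimpleGraph.Walk.darts_cons, List.map_cons, List.sum_cons, ih]
    simp

set_option maxHeartbeats 1000000 in
lemma lin_yau_core (G : SimpleGraph V) [DecidableRel G.Adj] (hconn : G.Connected)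
    (hcard : 2 ≤ Fintype.card V) (μ : ℝ) (hμ0 : μ ≠ 0) (f : V → ℝ)
    (hkey : ∀ v, (G.degree v : ℝ) * f v - (∑ u, if G.Adj v u then f u else 0)
        = μ * ((G.degree v : ℝ) * f v))
    (u0 : V) (hu0 : 0 < f u0) (hmax : ∀ v, |f v| ≤ f u0) :
    1 / (2 * (Fintype.card V : ℝ) * (G.maxDegree : ℝ) * (G.diam : ℝ)) ≤ μ := by
  -- every vertex has positive degree
  have hdeg : ∀ v, 0 < G.degree v := by
    intro v
    rw [G.degree_pos_iff_exists_adj]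
    obtain ⟨u, hu⟩ := Fintype.exists_ne_of_one_lt_card (by omega) v
    obtain ⟨p⟩ := hconn v u
    cases p with
    | nil => exact absurd rfl hu.symm
    | cons h q => exact ⟨_, h⟩
  -- row sums
  have hrow : ∀ (g : V → ℝ) (v : V), (∑ u, if G.Adj v u then g u else 0)
      = ∑ u ∈ G.neighborFinset v, g u := by
    intro g v
    rw [SimpleGraph.neighborFinset_eq_filter, Finset.sum_filter]
  have hrowc : ∀ (v : V) (c : ℝ), (∑ u, if G.Adj v u then c else 0) = (G.degree v : ℝ) * c := by
    intro v c
    rw [hrow, Finset.sum_const, SimpleGraph.card_neighborFinset_eq_degree, nsmul_eq_mul]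
  -- column/row swap
  have hswap : ∀ g : V → ℝ, (∑ v, ∑ u, if G.Adj v u then g u else 0)
      = ∑ u, (G.degree u : ℝ) * g u := by
    intro g
    rw [Finset.sum_comm]
    refine Finset.sum_congr rfl fun u _ => ?_
    have : (∑ v, if G.Adj v u then g u else 0) = (∑ v, if G.Adj u v then g u else 0) := by
      refine Finset.sum_congr rfl fun v _ => ?_
      by_cases h : G.Adj v u
      · rw [if_pos h, if_pos h.symm]
      · rw [if_neg h, if_neg (fun h' => h h'.symm)]
    rw [this, hrowc]
  set S1 : ℝ := ∑ v, (G.degree v : ℝ) * f v with hS1def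
  have hS1 : S1 = 0 := by
    have hsum := Finset.sum_congr rfl (fun v (_ : v ∈ univ) => hkey v)
    rw [Finset.sum_sub_distrib, hswap f, ← Finset.mul_sum] at hsum
    have : μ * S1 = 0 := by rw [hS1def]; linarith [hsum]
    rcases mul_eq_zero.mp this with h | h
    · exact absurd h hμ0
    · exact h
  set E2 : ℝ := ∑ v, (G.degree v : ℝ) * f v ^ 2 with hE2def
  set T : ℝ := ∑ v, ∑ u, if G.Adj v u then (f v - f u) ^ 2 else 0 with hTdef
  -- mixed sum
  have hmix : (∑ v, ∑ u, if G.Adj v u then f v * f u else 0) = (1 - μ) * E2 := by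
    have : ∀ v, (∑ u, if G.Adj v u then f v * f u else 0)
        = (1 - μ) * ((G.degree v : ℝ) * f v ^ 2) := by
      intro v
      have h1 : (∑ u, if G.Adj v u then f v * f u else 0)
          = f v * (∑ u, if G.Adj v u then f u else 0) := by
        rw [Finset.mul_sum]
        exact Finset.sum_congr rfl fun u _ => by split <;> ring
      have h3 : (∑ u, if G.Adj v u then f u else 0)
          = (1 - μ) * ((G.degree v : ℝ) * f v) := by linarith [hkey v]
      rw [h1, h3]
      ring
    rw [Finset.sum_congr rfl fun v _ => this v, ← Finset.mul_sum]
  have hT : T = 2 * (μ * E2) := by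
    have expand : ∀ v, (∑ u, if G.Adj v u then (f v - f u) ^ 2 else 0)
        = (∑ u, if G.Adj v u then f v ^ 2 else 0)
          + (∑ u, if G.Adj v u then f u ^ 2 else 0)
          - 2 * (∑ u, if G.Adj v u then f v * f u else 0) := by
      intro v
      rw [Finset.mul_sum, ← Finset.sum_add_distrib, ← Finset.sum_sub_distrib]
      refine Finset.sum_congr rfl fun u _ => by split <;> ring
    rw [hTdef, Finset.sum_congr rfl fun v _ => expand v]
    rw [Finset.sum_sub_distrib, Finset.sum_add_distrib, hswap (fun u => f u ^ 2),
      ← Finset.mul_sum, hmix]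
    have : (∑ v, ∑ u, if G.Adj v u then f v ^ 2 else 0) = E2 := by
      rw [hE2def]
      exact Finset.sum_congr rfl fun v _ => hrowc v (f v ^ 2)
    rw [this]
    ring
  -- positivity facts
  have hE2pos : 0 < E2 := by
    rw [hE2def]
    have h1 : (G.degree u0 : ℝ) * f u0 ^ 2 ≤ E2 := by
      rw [hE2def]
      apply Finset.single_le_sum (f := fun v => (G.degree v : ℝ) * f v ^ 2) _ (mem_univ u0)
      intro v _
      positivity
    have : (0:ℝ) < (G.degree u0 : ℝ) * f u0 ^ 2 := by
      have := hdeg u0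
      positivity
    linarith
  have hTnonneg : 0 ≤ T := by
    rw [hTdef]
    apply Finset.sum_nonneg; intro v _
    apply Finset.sum_nonneg; intro u _
    split <;> positivity
  have hμpos : 0 < μ := by
    rcases lt_trichotomy μ 0 with h | h | h
    · nlinarith
    · exact absurd h hμ0
    · exact h
  -- a vertex with nonpositive value
  have hw0 : ∃ w, f w ≤ 0 := by
    by_contra h
    push_neg at h
    have hnV : Nonempty V := ⟨u0⟩
    have : 0 < S1 := by
      rw [hS1def]
      apply Finset.sum_pos _ univ_nonempty
      intro v _
      have h1 := hdeg v
      have h2 := h v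
      positivity
    linarith [hS1]
  obtain ⟨w0, hw0⟩ := hw0
  have hne : w0 ≠ u0 := fun h => by rw [h] at hw0; linarith
  -- shortest path
  obtain ⟨p, hp⟩ := (hconn w0 u0).exists_walk_length_eq_dist
  have hpath : p.IsPath := p.isPath_of_length_eq_dist hp
  have hkpos : 1 ≤ p.length := by
    rcases Nat.eq_zero_or_pos p.length with h | h
    · exfalso
      rw [hp] at h
      exact hne (hconn.dist_eq_zero_iff.mp h)
    · exact h
  have hkdiam : p.length ≤ G.diam := by
    rw [hp]; exact SimpleGraph.dist_le_diam (ediam_ne_top_aux G hconn)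
  -- telescoping and Cauchy-Schwarz
  set l : List ℝ := p.darts.map (fun d => f d.snd - f d.fst) with hldef
  have htel : l.sum = f u0 - f w0 := walk_darts_telescope f p
  have hCS : (f u0 - f w0) ^ 2 ≤ (p.length : ℝ) * (l.map (· ^ 2)).sum := by
    have := list_sum_sq_le l
    rw [htel] at this
    rwa [hldef, List.length_map, SimpleGraph.Walk.length_darts] at this
  -- darts sum bounded by T
  set Sd : ℝ := (l.map (· ^ 2)).sum with hSddef
  have hSdT : Sd ≤ T := by
    set F : V × V → ℝ := fun x => if G.Adj x.1 x.2 then (f x.1 - f x.2) ^ 2 else 0 with hFdef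
    have hFnn : ∀ x, 0 ≤ F x := by intro x; rw [hFdef]; dsimp; split <;> positivity
    have hnodup : (p.darts.map SimpleGraph.Dart.toProd).Nodup :=
      (SimpleGraph.Walk.darts_nodup_of_support_nodup hpath.support_nodup).map
        SimpleGraph.Dart.toProd_injective
    have h1 : Sd = ((p.darts.map SimpleGraph.Dart.toProd).map F).sum := by
      rw [hSddef, hldef, List.map_map, List.map_map]
      apply congrArg List.sum
      apply List.map_congr_left
      intro d _
      simp only [Function.comp_apply, hFdef]
      rw [if_pos d.adj]
      ring
    have h2 : ((p.darts.map SimpleGraph.Dart.toProd).map F).sum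
        = ∑ x ∈ (p.darts.map SimpleGraph.Dart.toProd).toFinset, F x :=
      (List.sum_toFinset F hnodup).symm
    have h3 : (∑ x ∈ (p.darts.map SimpleGraph.Dart.toProd).toFinset, F x) ≤ ∑ x : V × V, F x :=
      Finset.sum_le_sum_of_subset_of_nonneg (Finset.subset_univ _) (fun x _ _ => hFnn x)
    have h4 : (∑ x : V × V, F x) = T := by
      rw [hTdef, Fintype.sum_prod_type]
    rw [h1, h2]
    rw [← h4]
    exact h3
  have hSdnn : 0 ≤ Sd := by
    rw [hSddef]
    apply List.sum_nonneg
    intro x hx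
    simp only [List.mem_map] at hx
    obtain ⟨a, _, rfl⟩ := hx
    positivity
  -- numerator bound : f u0 ^ 2 ≤ diam * T
  have hnum : f u0 ^ 2 ≤ (G.diam : ℝ) * T := by
    have h0 : f u0 ^ 2 ≤ (f u0 - f w0) ^ 2 := by nlinarith
    have h1 : (p.length : ℝ) * Sd ≤ (G.diam : ℝ) * T := by
      apply mul_le_mul _ hSdT hSdnn (by positivity)
      exact_mod_cast hkdiam
    calc f u0 ^ 2 ≤ (f u0 - f w0) ^ 2 := h0
      _ ≤ (p.length : ℝ) * Sd := hCS
      _ ≤ _ := h1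
  -- denominator bound
  have hden : E2 ≤ (Fintype.card V : ℝ) * (G.maxDegree : ℝ) * f u0 ^ 2 := by
    rw [hE2def]
    calc (∑ v, (G.degree v : ℝ) * f v ^ 2)
        ≤ ∑ _v : V, (G.maxDegree : ℝ) * f u0 ^ 2 := by
          apply Finset.sum_le_sum
          intro v _
          apply mul_le_mul
          · exact_mod_cast G.degree_le_maxDegree v
          · have := abs_le.mp (hmax v)
            nlinarith
          · positivity
          · positivity
      _ = (Fintype.card V : ℝ) * ((G.maxDegree : ℝ) * f u0 ^ 2) := by
          rw [Finset.sum_const, nsmul_eq_mul, Finset.card_univ]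
      _ = _ := by ring
  -- casts
  have hd1 : (1:ℝ) ≤ (G.maxDegree : ℝ) := by
    have := le_trans (hdeg u0) (G.degree_le_maxDegree u0)
    exact_mod_cast this
  have hδ1 : (1:ℝ) ≤ (G.diam : ℝ) := by
    have : 1 ≤ G.diam := le_trans hkpos hkdiam
    exact_mod_cast this
  have hn2 : (2:ℝ) ≤ (Fintype.card V : ℝ) := by exact_mod_cast hcard
  -- combine
  have hfu2 : 0 < f u0 ^ 2 := by positivity
  set n : ℝ := (Fintype.card V : ℝ)
  set d : ℝ := (G.maxDegree : ℝ)
  set δ : ℝ := (G.diam : ℝ)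
  have hchain : f u0 ^ 2 ≤ δ * (2 * (μ * E2)) := by rw [← hT]; exact hnum
  have h5 : μ * E2 ≤ μ * (n * d * f u0 ^ 2) := by
    exact mul_le_mul_of_nonneg_left hden hμpos.le
  have h6 : f u0 ^ 2 ≤ (2 * n * d * δ * μ) * f u0 ^ 2 := by nlinarith
  have h7 : 1 ≤ 2 * n * d * δ * μ := by
    nlinarith
  rw [div_le_iff₀ (by nlinarith)]
  nlinarith


lemma ball_succ_le (G : SimpleGraph V) [DecidableRel G.Adj] (hconn : G.Connected) (v₀ : V) (r : ℕ) :
    (univ.filter fun v => G.dist v₀ v ≤ r + 1).card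
      ≤ (G.maxDegree + 1) * (univ.filter fun v => G.dist v₀ v ≤ r).card := by
  have hex : ∀ v : V, ∃ u : V, (u = v ∨ G.Adj u v) ∧ (G.dist v₀ v ≤ r + 1 → G.dist v₀ u ≤ r) := by
    intro v
    by_cases h : G.dist v₀ v ≤ r
    · exact ⟨v, Or.inl rfl, fun _ => h⟩
    by_cases h2 : G.dist v₀ v ≤ r + 1
    swap
    · exact ⟨v, Or.inl rfl, fun hc => absurd hc h2⟩
    obtain ⟨p, hp⟩ := (hconn v₀ v).exists_walk_length_eq_dist
    cases hq : p.reverse with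
    | nil =>
        exfalso
        have : p.length = 0 := by
          have := congrArg SimpleGraph.Walk.length hq
          simpa using this
        omega
    | @cons _ u _ hadj q' =>
        refine ⟨u, Or.inr hadj.symm, fun _ => ?_⟩
        have hlen : p.length = q'.length + 1 := by
          have := congrArg SimpleGraph.Walk.length hq
          simpa using this
        have := SimpleGraph.dist_le q'.reverse
        rw [SimpleGraph.Walk.length_reverse] at this
        omega
  choose pred hpred1 hpred2 using hex
  apply Finset.card_le_mul_card_image_of_maps_to (t := univ.filter fun v => G.dist v₀ v ≤ r)
  · intro a ha
    simp only [mem_filter, mem_univ, true_and] at ha ⊢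
    exact hpred2 a ha
  · intro b _
    have hsub : ((univ.filter fun v => G.dist v₀ v ≤ r + 1).filter fun a => pred a = b)
        ⊆ insert b (G.neighborFinset b) := by
      intro a ha
      simp only [mem_filter] at ha
      rcases hpred1 a with h | h
      · have : a = b := by rw [← ha.2, h]
        subst this
        exact mem_insert_self _ _
      · rw [ha.2] at h
        exact mem_insert_of_mem (by rwa [SimpleGraph.mem_neighborFinset])
    calc _ ≤ (insert b (G.neighborFinset b)).card := Finset.card_le_card hsub
      _ ≤ (G.neighborFinset b).card + 1 := Finset.card_insert_le _ _
      _ ≤ G.maxDegree + 1 := by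
          have := G.degree_le_maxDegree b
          rw [← SimpleGraph.card_neighborFinset_eq_degree] at this
          omega

lemma card_le_ball (G : SimpleGraph V) [DecidableRel G.Adj] (hconn : G.Connected) :
    Fintype.card V ≤ (G.maxDegree + 1) ^ G.diam := by
  have hV : Nonempty V := hconn.nonempty
  obtain ⟨v₀⟩ := hV
  have hball : ∀ r : ℕ, (univ.filter fun v => G.dist v₀ v ≤ r).card ≤ (G.maxDegree + 1) ^ r := by
    intro r
    induction r with
    | zero =>
        have : (univ.filter fun v => G.dist v₀ v ≤ 0) ⊆ {v₀} := by
          intro v hv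
          simp only [mem_filter, Nat.le_zero] at hv
          simp [(hconn.dist_eq_zero_iff.mp hv.2).symm]
        simpa using Finset.card_le_card this
    | succ r ih =>
        calc _ ≤ (G.maxDegree + 1) * (univ.filter fun v => G.dist v₀ v ≤ r).card :=
              ball_succ_le G hconn v₀ r
          _ ≤ (G.maxDegree + 1) * (G.maxDegree + 1) ^ r := by
              exact Nat.mul_le_mul_left _ ih
          _ = (G.maxDegree + 1) ^ (r + 1) := (pow_succ' _ _).symm
  have huniv : (univ : Finset V) = univ.filter fun v => G.dist v₀ v ≤ G.diam := by
    ext v; simp [SimpleGraph.dist_le_diam (ediam_ne_top_aux G hconn)]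
  calc Fintype.card V = (univ.filter fun v => G.dist v₀ v ≤ G.diam).card := by
        rw [← huniv]; rfl
    _ ≤ _ := hball _

lemma numeric_aux (d δ n : ℕ) (hd : 1 ≤ d) (hδ : 1 ≤ δ) (hn : n ≤ (d + 1) ^ δ) :
    2 * (n : ℝ) ≤ Real.exp ((d : ℝ) * (δ : ℝ) + 1) - 1 := by
  have h1 : (n : ℝ) ≤ ((d : ℝ) + 1) ^ δ := by exact_mod_cast hn
  have h2 : ((d : ℝ) + 1) ^ δ ≤ Real.exp (d : ℝ) ^ δ := by
    apply pow_le_pow_left₀ (by positivity)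
    linarith [Real.add_one_le_exp (d : ℝ)]
  have h3 : Real.exp (d : ℝ) ^ δ = Real.exp ((d : ℝ) * (δ : ℝ)) := by
    rw [mul_comm, ← Real.exp_nat_mul]
  have hx1 : (1 : ℝ) ≤ (d : ℝ) * (δ : ℝ) := by
    have : (1:ℝ) ≤ (d:ℝ) := by exact_mod_cast hd
    have : (1:ℝ) ≤ (δ:ℝ) := by exact_mod_cast hδ
    nlinarith [(by exact_mod_cast hd : (1:ℝ) ≤ (d:ℝ))]
  set x : ℝ := (d : ℝ) * (δ : ℝ)
  have hxe : Real.exp 1 ≤ Real.exp x := Real.exp_le_exp.mpr hx1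
  have he : (2.7182818283 : ℝ) < Real.exp 1 := Real.exp_one_gt_d9
  have hadd : Real.exp (x + 1) = Real.exp x * Real.exp 1 := Real.exp_add x 1
  have key : 2 * Real.exp x ≤ Real.exp (x + 1) - 1 := by
    nlinarith [mul_nonneg (sub_nonneg.mpr hxe) (by nlinarith : (0:ℝ) ≤ Real.exp 1 - 2)]
  have : (n : ℝ) ≤ Real.exp x := by
    calc (n:ℝ) ≤ ((d : ℝ) + 1) ^ δ := h1
      _ ≤ Real.exp (d:ℝ) ^ δ := h2
      _ = Real.exp x := h3
  linarith


theorem lin_yau_main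
    (G : SimpleGraph V) [DecidableRel G.Adj]
    (hconn : G.Connected) (hcard : 2 ≤ Fintype.card V)
    (μ : ℝ) (hμ : Module.End.HasEigenvalue (Matrix.toLin' (G.normLapMatrix ℝ)) μ)
    (hμ0 : μ ≠ 0) :
    1 / ((G.maxDegree : ℝ) * (G.diam : ℝ) *
        (Real.exp ((G.maxDegree : ℝ) * (G.diam : ℝ) + 1) - 1)) ≤ μ := by
  have hnV : Nonempty V := hconn.nonempty
  have hdeg : ∀ v, 0 < G.degree v := by
    intro v
    rw [G.degree_pos_iff_exists_adj]
    obtain ⟨u, hu⟩ := Fintype.exists_ne_of_one_lt_card (by omega) v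
    obtain ⟨p⟩ := hconn v u
    cases p with
    | nil => exact absurd rfl hu.symm
    | cons h q => exact ⟨_, h⟩
  -- extract  eigenvector
  obtain ⟨f, hf⟩ := hμ.exists_hasEigenvector
  have hfne : f ≠ 0 := hf.right
  have happ : (G.normLapMatrix ℝ).mulVec f = μ • f := by
    have := hf.apply_eq_smul
    rwa [Matrix.toLin'_apply] at this
  have hkey : ∀ v, (G.degree v : ℝ) * f v - (∑ u, if G.Adj v u then f u else 0)
      = μ * ((G.degree v : ℝ) * f v) := by
    intro v
    have h := congrFun happ v
    rw [SimpleGraph.normLapMatrix, Matrix.sub_mulVec, Matrix.one_mulVec,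
      ← Matrix.mulVec_mulVec] at h
    have h' : f v - (G.degree v : ℝ)⁻¹ * ((G.adjMatrix ℝ *ᵥ f) v) = μ * f v := by
      have := Matrix.mulVec_diagonal (fun v => ((G.degree v : ℝ))⁻¹) (G.adjMatrix ℝ *ᵥ f) v
      rw [Pi.sub_apply, this] at h
      simpa using h
    rw [SimpleGraph.adjMatrix_mulVec_apply] at h'
    have hdv : (G.degree v : ℝ) ≠ 0 := by
      have := hdeg v; positivity
    have hsum : (∑ u, if G.Adj v u then f u else 0) = ∑ u ∈ G.neighborFinset v, f u := by
      rw [SimpleGraph.neighborFinset_eq_filter, Finset.sum_filter]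
    have h2 : (G.degree v : ℝ)⁻¹ * (∑ u ∈ G.neighborFinset v, f u) = f v - μ * f v := by
      linarith
    have h3 : (∑ u ∈ G.neighborFinset v, f u)
        = (G.degree v : ℝ) * (f v - μ * f v) := by
      rw [← h2, ← mul_assoc, mul_inv_cancel₀ hdv, one_mul]
    rw [hsum, h3]
    ring
  -- choose max |f| vertex and fix the sign
  obtain ⟨u0, -, hu0max⟩ := Finset.exists_max_image univ (fun v => |f v|) univ_nonempty
  have hu0pos : 0 < |f u0| := by
    obtain ⟨v, hv⟩ := Function.ne_iff.mp hfne
    have : 0 < |f v| := abs_pos.mpr hv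
    exact lt_of_lt_of_le this (hu0max v (mem_univ v))
  have hcore : 1 / (2 * (Fintype.card V : ℝ) * (G.maxDegree : ℝ) * (G.diam : ℝ)) ≤ μ := by
    rcases le_or_gt 0 (f u0) with hsgn | hsgn
    · apply lin_yau_core G hconn hcard μ hμ0 f hkey u0
      · rwa [abs_of_nonneg hsgn] at hu0pos
      · intro v
        have := hu0max v (mem_univ v)
        rwa [abs_of_nonneg hsgn] at this
    · apply lin_yau_core G hconn hcard μ hμ0 (fun v => -f v) _ u0
      · simpa using hsgn
      · intro v
        have := hu0max v (mem_univ v)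
        rw [abs_of_neg hsgn] at this
        simpa using this
      · intro v
        have hk := hkey v
        have hneg : (∑ u, if G.Adj v u then -f u else 0)
            = -(∑ u, if G.Adj v u then f u else 0) := by
          rw [← Finset.sum_neg_distrib]
          exact Finset.sum_congr rfl fun u _ => by split <;> ring
        rw [hneg]
        ring_nf
        ring_nf at hk
        linarith
  -- counting and numerics
  have hcount : Fintype.card V ≤ (G.maxDegree + 1) ^ G.diam := card_le_ball G hconn
  have hd1 : 1 ≤ G.maxDegree := le_trans (hdeg (Classical.arbitrary V))
    (G.degree_le_maxDegree _)
  have hδ1 : 1 ≤ G.diam := by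
    obtain ⟨u, v, huv⟩ := Fintype.exists_pair_of_one_lt_card (α := V) (by omega)
    have h1 : 0 < G.dist u v := (hconn u v).pos_dist_of_ne huv
    have h2 := SimpleGraph.dist_le_diam (ediam_ne_top_aux G hconn) (u := u) (v := v)
    omega
  have hnum := numeric_aux G.maxDegree G.diam (Fintype.card V) hd1 hδ1 hcount
  have hdR : (1:ℝ) ≤ (G.maxDegree : ℝ) := by exact_mod_cast hd1
  have hδR : (1:ℝ) ≤ (G.diam : ℝ) := by exact_mod_cast hδ1
  have hnR : (2:ℝ) ≤ (Fintype.card V : ℝ) := by exact_mod_cast hcard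
  set n : ℝ := (Fintype.card V : ℝ)
  set d : ℝ := (G.maxDegree : ℝ)
  set δ : ℝ := (G.diam : ℝ)
  have hn0 : (0:ℝ) < n := lt_of_lt_of_le two_pos hnR
  have hd0 : (0:ℝ) < d := lt_of_lt_of_le one_pos hdR
  have hδ0 : (0:ℝ) < δ := lt_of_lt_of_le one_pos hδR
  have hpos2 : (0:ℝ) < 2 * n * d * δ := by
    have := mul_pos (mul_pos (mul_pos two_pos hn0) hd0) hδ0
    linarith
  have hle : 2 * n * d * δ ≤ d * δ * (Real.exp (d * δ + 1) - 1) := by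
    have h := mul_le_mul_of_nonneg_left hnum (le_of_lt (mul_pos hd0 hδ0))
    nlinarith [h]
  calc 1 / (d * δ * (Real.exp (d * δ + 1) - 1))
      ≤ 1 / (2 * n * d * δ) := one_div_le_one_div_of_le hpos2 hle
    _ ≤ μ := hcore



end LinYauAux

/-- (Lin–Yau bound.)  For a finite connected simple graph `G` with at least two vertices,
with diameter `δ(G)` and maximum degree `d(G)`, every nonzero eigenvalue of the random-walk
normalized Laplacian `Δ = I - D⁻¹A` — in particular the spectral gap `λ₁`, the smallest
such — satisfies `λ ≥ 1/( d(G)·δ(G)·( exp(d(G)·δ(G) + 1) − 1 ) )`. -/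
theorem spectral_gap_ge_lin_yau_bound
    {V : Type*} [Fintype V] [DecidableEq V] (G : SimpleGraph V) [DecidableRel G.Adj]
    (hconn : G.Connected) (hcard : 2 ≤ Fintype.card V)
    (μ : ℝ) (hμ : Module.End.HasEigenvalue (Matrix.toLin' (G.normLapMatrix ℝ)) μ)
    (hμ0 : μ ≠ 0) :
    1 / ((G.maxDegree : ℝ) * (G.diam : ℝ) *
        (Real.exp ((G.maxDegree : ℝ) * (G.diam : ℝ) + 1) - 1)) ≤ μ :=
  lin_yau_main G hconn hcard μ hμ hμ0
end

section
/- (Lin–Yau curvature-dimension inequality.) Let G = (V,E) be a finite simple graph in which every vertex has positive degree, and let d(G) = max_{v ∈ V} d(v) be the maximum vertex degree. Then for every function f : V → ℝ and every vertex x, Γ₂(f,f)(x) ≥ ½ (Δf(x))² + (1/d(G) − 1) · Γ(f,f)(x); that is, G satisfies the curvature-dimension inequality CD(2, 1/d(G) − 1). -/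
open Finset

variable {V : Type*} [Fintype V] [DecidableEq V]

/-- The (Lin–Yau convention) graph Laplacian operator on functions:
`(Δf)(x) = (1/d(x)) ∑_{y ~ x} (f y − f x)`. -/
noncomputable def SimpleGraph.lapOp (G : SimpleGraph V) [DecidableRel G.Adj] (f : V → ℝ) : V → ℝ :=
  fun x => (∑ y ∈ G.neighborFinset x, (f y - f x)) / (G.degree x : ℝ)

/-- The bilinear form `Γ(f,g) = ½( Δ(fg) − f·Δg − g·Δf )`. -/
noncomputable def SimpleGraph.gammaOp (G : SimpleGraph V) [DecidableRel G.Adj] (f g : V → ℝ) : V → ℝ :=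
  fun x => (G.lapOp (f * g) x - f x * G.lapOp g x - g x * G.lapOp f x) / 2

/-- The iterated form `Γ₂(f,g) = ½( ΔΓ(f,g) − Γ(f,Δg) − Γ(g,Δf) )`. -/
noncomputable def SimpleGraph.gamma2Op (G : SimpleGraph V) [DecidableRel G.Adj] (f g : V → ℝ) : V → ℝ :=
  fun x => (G.lapOp (G.gammaOp f g) x - G.gammaOp f (G.lapOp g) x
      - G.gammaOp g (G.lapOp f) x) / 2

/-!
Expanding the definitions gives the identity
`2 Γ₂(f,f)(x) = (1/2d(x)) ∑_{y∼x} (1/d(y)) ∑_{z∼y} (f z − 2 f y + f x)² − 2 Γ(f,f)(x) + (Δf(x))²`.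
In the inner sum over `z ∼ y` keep only the term `z = x`, which is `4 (f y − f x)²`, and bound
`d(y) ≤ d(G)`: the double sum is then at least `(4 / d(G)) Γ(f,f)(x)`, so `G` even satisfies
`CD(2, 2/d(G) − 1)`, and `Γ(f,f) ≥ 0` gives the weaker constant.
-/

namespace SimpleGraph

variable {V : Type*} [Fintype V] (G : SimpleGraph V) [DecidableRel G.Adj] (f : V → ℝ)

theorem gammaOp_apply (g : V → ℝ) (x : V) :
    G.gammaOp f g x =
      (∑ y ∈ G.neighborFinset x, (f y - f x) * (g y - g x)) / (2 * G.degree x) := by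
  have expand : ∑ y ∈ G.neighborFinset x, (f y - f x) * (g y - g x) =
      ∑ y ∈ G.neighborFinset x, (f y * g y - f x * g x)
        - f x * ∑ y ∈ G.neighborFinset x, (g y - g x)
        - g x * ∑ y ∈ G.neighborFinset x, (f y - f x) := by
    rw [mul_sum, mul_sum, ← sum_sub_distrib, ← sum_sub_distrib]
    exact sum_congr rfl fun y _ => by ring
  rw [expand]
  simp only [gammaOp, lapOp, Pi.mul_apply]
  ring

theorem gammaOp_self_nonneg (x : V) : 0 ≤ G.gammaOp f f x := by
  rw [gammaOp_apply]
  exact div_nonneg (sum_nonneg fun y _ => mul_self_nonneg _) (by positivity)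

theorem sum_sq_sub_eq_mul_gammaOp (x : V) :
    ∑ y ∈ G.neighborFinset x, (f y - f x) ^ 2 = 2 * G.degree x * G.gammaOp f f x := by
  rcases eq_or_ne (G.degree x) 0 with hx | hx
  · have hN : G.neighborFinset x = ∅ := by rwa [← card_eq_zero, card_neighborFinset_eq_degree]
    simp [hN, hx]
  · rw [gammaOp_apply, mul_div_cancel₀ _ (by positivity)]
    exact sum_congr rfl fun y _ => sq _

theorem sum_sub_eq_degree_mul_lapOp {x : V} (hx : 0 < G.degree x) :
    ∑ y ∈ G.neighborFinset x, (f y - f x) = G.degree x * G.lapOp f x := by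
  rw [lapOp, mul_div_cancel₀ _ (by positivity)]

theorem gammaOp_self_sub_mul_lapOp {y : V} (hy : 0 < G.degree y) (c : ℝ) :
    G.gammaOp f f y - (f y - c) * G.lapOp f y =
      (∑ z ∈ G.neighborFinset y, (f z - 2 * f y + c) ^ 2) / (2 * G.degree y)
        - (f y - c) ^ 2 / 2 := by
  have expand : ∑ z ∈ G.neighborFinset y, (f z - 2 * f y + c) ^ 2 =
      ∑ z ∈ G.neighborFinset y, (f z - f y) ^ 2
        - 2 * (f y - c) * ∑ z ∈ G.neighborFinset y, (f z - f y)
        + ∑ _z ∈ G.neighborFinset y, (f y - c) ^ 2 := by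
    rw [mul_sum, ← sum_sub_distrib, ← sum_add_distrib]
    exact sum_congr rfl fun z _ => by ring
  rw [expand, sum_sq_sub_eq_mul_gammaOp, sum_sub_eq_degree_mul_lapOp G f hy, sum_const,
    card_neighborFinset_eq_degree, nsmul_eq_mul]
  field_simp
  ring

theorem two_mul_gamma2Op_self {x : V} (hx : 0 < G.degree x) :
    2 * G.gamma2Op f f x =
      (∑ y ∈ G.neighborFinset x,
          (∑ z ∈ G.neighborFinset y, (f z - 2 * f y + f x) ^ 2) / (G.degree y : ℝ))
          / (2 * G.degree x)
        - 2 * G.gammaOp f f x + G.lapOp f x ^ 2 := by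
  set N := G.neighborFinset x
  have hd : (G.degree x : ℝ) ≠ 0 := by positivity
  have hlapΓ : G.degree x * G.lapOp (G.gammaOp f f) x =
      ∑ y ∈ N, G.gammaOp f f y - G.degree x * G.gammaOp f f x := by
    rw [← sum_sub_eq_degree_mul_lapOp G _ hx, sum_sub_distrib, sum_const,
      card_neighborFinset_eq_degree, nsmul_eq_mul]
  have hcross : 2 * G.degree x * G.gammaOp f (G.lapOp f) x =
      ∑ y ∈ N, (f y - f x) * G.lapOp f y - G.degree x * G.lapOp f x ^ 2 := by
    have split : ∑ y ∈ N, (f y - f x) * (G.lapOp f y - G.lapOp f x) =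
        ∑ y ∈ N, (f y - f x) * G.lapOp f y - (∑ y ∈ N, (f y - f x)) * G.lapOp f x := by
      rw [sum_mul, ← sum_sub_distrib]
      exact sum_congr rfl fun y _ => by ring
    rw [gammaOp_apply, mul_div_cancel₀ _ (by positivity), split,
      sum_sub_eq_degree_mul_lapOp G f hx]
    ring
  have hlocal : ∑ y ∈ N, (G.gammaOp f f y - (f y - f x) * G.lapOp f y) =
      (∑ y ∈ N, (∑ z ∈ G.neighborFinset y, (f z - 2 * f y + f x) ^ 2) / (G.degree y : ℝ))
          / 2 - G.degree x * G.gammaOp f f x := by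
    rw [sum_congr rfl fun y hy => G.gammaOp_self_sub_mul_lapOp f
      ((G.degree_pos_iff_exists_adj y).2 ⟨x, ((G.mem_neighborFinset x y).1 hy).symm⟩) (f x),
      sum_sub_distrib, ← sum_div, sum_sq_sub_eq_mul_gammaOp]
    simp only [div_mul_eq_div_div_swap]
    rw [← sum_div]
    ring
  have hΓ₂ : 2 * G.gamma2Op f f x =
      G.lapOp (G.gammaOp f f) x - 2 * G.gammaOp f (G.lapOp f) x := by
    simp only [gamma2Op]
    ring
  rw [sum_sub_distrib] at hlocal
  rw [hΓ₂]
  field_simp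
  linear_combination 2 * hlapΓ - 2 * hcross + 2 * hlocal

theorem four_mul_sq_sub_div_maxDegree_le {x y : V} (hxy : G.Adj x y) :
    4 * (f y - f x) ^ 2 / (G.maxDegree : ℝ) ≤
      (∑ z ∈ G.neighborFinset y, (f z - 2 * f y + f x) ^ 2) / (G.degree y : ℝ) := by
  have hx : x ∈ G.neighborFinset y := (G.mem_neighborFinset y x).2 hxy.symm
  have term_x : 4 * (f y - f x) ^ 2 ≤ ∑ z ∈ G.neighborFinset y, (f z - 2 * f y + f x) ^ 2 :=
    calc 4 * (f y - f x) ^ 2 = (f x - 2 * f y + f x) ^ 2 := by ring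
      _ ≤ _ := single_le_sum (f := fun z => (f z - 2 * f y + f x) ^ 2)
          (fun z _ => sq_nonneg _) hx
  exact div_le_div₀ (sum_nonneg fun z _ => sq_nonneg _) term_x
    (by exact_mod_cast (G.degree_pos_iff_exists_adj y).2 ⟨x, hxy.symm⟩)
    (by exact_mod_cast G.degree_le_maxDegree y)

theorem four_div_maxDegree_mul_gammaOp_self_le (x : V) :
    4 / (G.maxDegree : ℝ) * G.gammaOp f f x ≤
      (∑ y ∈ G.neighborFinset x,
          (∑ z ∈ G.neighborFinset y, (f z - 2 * f y + f x) ^ 2) / (G.degree y : ℝ))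
        / (2 * G.degree x) := by
  rw [gammaOp_apply, mul_div_assoc', mul_sum]
  gcongr with y hy
  rw [← sq, ← mul_div_right_comm]
  exact G.four_mul_sq_sub_div_maxDegree_le f ((G.mem_neighborFinset x y).1 hy)

theorem gamma2Op_self_ge (x : V) :
    G.gamma2Op f f x ≥
      1 / 2 * G.lapOp f x ^ 2 + (2 / (G.maxDegree : ℝ) - 1) * G.gammaOp f f x := by
  rcases (G.degree x).eq_zero_or_pos with hx | hx
  · simp [gamma2Op, gammaOp, lapOp, hx]
  · linear_combination
      (G.four_div_maxDegree_mul_gammaOp_self_le f x - G.two_mul_gamma2Op_self f hx) / 2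

end SimpleGraph

theorem lin_yau_curvature_dimension_inequality_general
    (G : SimpleGraph V) [DecidableRel G.Adj]
    (f : V → ℝ) (x : V) :
    G.gamma2Op f f x ≥
      (1 / 2) * (G.lapOp f x) ^ 2 + (1 / (G.maxDegree : ℝ) - 1) * G.gammaOp f f x := by
  have weaker : 1 / (G.maxDegree : ℝ) - 1 ≤ 2 / G.maxDegree - 1 := by
    gcongr
    norm_num
  linear_combination G.gamma2Op_self_ge f x
    + mul_le_mul_of_nonneg_right weaker (G.gammaOp_self_nonneg f x)

/-- (Lin–Yau curvature-dimension inequality.)  A finite simple graph with all vertex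
degrees positive and maximal degree `d(G)` satisfies `CD(2, 1/d(G) − 1)`:
`Γ₂(f,f)(x) ≥ ½ (Δf(x))² + (1/d(G) − 1)·Γ(f,f)(x)` for all `f : V → ℝ` and all `x`. -/
theorem lin_yau_curvature_dimension_inequality
    (G : SimpleGraph V) [DecidableRel G.Adj] (hdeg : ∀ v, 0 < G.degree v)
    (f : V → ℝ) (x : V) :
    G.gamma2Op f f x ≥
      (1 / 2) * (G.lapOp f x) ^ 2 + (1 / (G.maxDegree : ℝ) - 1) * G.gammaOp f f x :=
  lin_yau_curvature_dimension_inequality_general G f x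
end
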